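/- Let G be a vertex-weighted graph with positive weights, let v be a vertex with w(v) ≤ w(u) for all u ∈ N[v], and let G' be obtained from G by the modified weighted struction at v. Let I be an independent set of G with v ∉ I and I ∩ N(v) ≠ ∅, let x be the smallest element of I ∩ N(v) in the fixed order, and let {y_1, …, y_p} = (I ∩ N(v)) \ {x}. Then the set (I \ {y_1, …, y_p}) ∪ {v_{x,y_1}, …, v_{x,y_p}} is an independent set of G' and its weight in G' equals w(I) − w(v). -/

import Mathlib

/-!
Modified weighted struction: applied at a vertex `v` whose weight is minimum
in its closed neighborhood.  It removes `v`, lowers the weight of every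
neighbor of `v` by `w v`, adds a new vertex `v_{x,y}` of weight `w y` for
every pair of non-adjacent neighbors `x < y` of `v`, connects every neighbor
`k` of `v` to every new vertex `v_{x,y}` with `x ≠ k`, and turns `N(v)` into
a clique.
-/

open scoped Classical

variable {V : Type*}

/-- `I` is an independent set of `G`. -/
def IsIndep (G : SimpleGraph V) (I : Finset V) : Prop :=
  ∀ x ∈ I, ∀ y ∈ I, ¬ G.Adj x y

/-- The weighted independence number of `G` with weights `w`: the supremum
(for a finite graph, the maximum) of the weights of independent sets. -/
noncomputable def alphaW (G : SimpleGraph V) (w : V → ℝ) : ℝ :=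
  sSup {r : ℝ | ∃ I : Finset V, IsIndep G I ∧ r = ∑ x ∈ I, w x}

/-- Old vertices of the struction at `v`: all vertices except `v`. -/
abbrev StrOld (v : V) : Type _ := {u : V // u ≠ v}

/-- New vertices of the struction at `v`: pairs of non-adjacent neighbors
`x < y` of `v` (with respect to the fixed linear order on the vertices). -/
abbrev StrNew [LinearOrder V] (G : SimpleGraph V) (v : V) : Type _ :=
  {p : V × V // G.Adj v p.1 ∧ G.Adj v p.2 ∧ p.1 < p.2 ∧ ¬ G.Adj p.1 p.2}

/-- Adjacency for the modified weighted struction at `v`: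
the edges of the original struction, plus an edge between each neighbor `k`
of `v` and each new vertex `v_{x,y}` with `x ≠ k`, plus all edges making
`N(v)` a clique. -/
def modRel [LinearOrder V] (G : SimpleGraph V) (v : V) :
    StrOld v ⊕ StrNew G v → StrOld v ⊕ StrNew G v → Prop
  | Sum.inl u, Sum.inl u' => G.Adj u.val u'.val ∨ (G.Adj v u.val ∧ G.Adj v u'.val)
  | Sum.inl u, Sum.inr p =>
      G.Adj u.val p.val.1 ∨ G.Adj u.val p.val.2 ∨ (G.Adj v u.val ∧ u.val ≠ p.val.1)
  | Sum.inr p, Sum.inl u =>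
      G.Adj u.val p.val.1 ∨ G.Adj u.val p.val.2 ∨ (G.Adj v u.val ∧ u.val ≠ p.val.1)
  | Sum.inr p, Sum.inr q => p.val.1 ≠ q.val.1 ∨ G.Adj p.val.2 q.val.2

/-- The graph obtained from `G` by the modified weighted struction at `v`. -/
def modStruction [LinearOrder V] (G : SimpleGraph V) (v : V) :
    SimpleGraph (StrOld v ⊕ StrNew G v) :=
  SimpleGraph.fromRel (modRel G v)

/-- Weights after the modified struction: neighbors of `v` have their weight
lowered by `w v`, other old vertices keep their weight, and each new vertex
`v_{x,y}` has weight `w y`. -/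
noncomputable def modWeight [LinearOrder V] (G : SimpleGraph V) (w : V → ℝ) (v : V) :
    StrOld v ⊕ StrNew G v → ℝ
  | Sum.inl u => if G.Adj v u.val then w u.val - w v else w u.val
  | Sum.inr p => w p.val.2

/-- let `I` be independent in `G` with `v ∉ I` and
`A = I ∩ N(v) ≠ ∅`, let `x` be the smallest element of `A` and
`{y_1, …, y_p} = A \ {x}`.  Then `(I \ {y_1, …, y_p}) ∪ {v_{x,y_1}, …, v_{x,y_p}}`
is an independent set of the modified struction graph `G'`, of weight
`w(I) - w(v)` there. -/
theorem modified_struction_shift_neighbors [Fintype V] [LinearOrder V]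
    (G : SimpleGraph V) (w : V → ℝ) (hw : ∀ u, 0 < w u) (v : V)
    (hv : ∀ u, (u = v ∨ G.Adj v u) → w v ≤ w u)
    (I : Finset V) (hI : IsIndep G I) (hvI : v ∉ I)
    (A : Finset V) (hA : A = I.filter fun y => G.Adj v y) (hAne : A.Nonempty)
    (x : V) (hx : x = A.min' hAne) :
    IsIndep (modStruction G v)
        (Finset.univ.filter
          (Sum.elim (fun u : StrOld v => u.val ∈ I ∧ u.val ∉ A.erase x)
            (fun p : StrNew G v => p.val.1 = x ∧ p.val.2 ∈ A.erase x))) ∧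
      ∑ a ∈ Finset.univ.filter
          (Sum.elim (fun u : StrOld v => u.val ∈ I ∧ u.val ∉ A.erase x)
            (fun p : StrNew G v => p.val.1 = x ∧ p.val.2 ∈ A.erase x)),
          modWeight G w v a = (∑ y ∈ I, w y) - w v := by

  -- basic facts
  have memA : ∀ y, y ∈ A ↔ y ∈ I ∧ G.Adj v y := by
    subst hA; intro y; simp [Finset.mem_filter]
  have hxA : x ∈ A := hx ▸ A.min'_mem hAne
  have hxI : x ∈ I := ((memA x).mp hxA).1
  have hvx : G.Adj v x := ((memA x).mp hxA).2
  have hyA : ∀ y ∈ A.erase x, y ∈ A := fun y hy => (Finset.mem_erase.mp hy).2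
  have hyI : ∀ y ∈ A.erase x, y ∈ I := fun y hy => ((memA y).mp (hyA y hy)).1
  have hvy : ∀ y ∈ A.erase x, G.Adj v y := fun y hy => ((memA y).mp (hyA y hy)).2
  have hlt : ∀ y ∈ A.erase x, x < y := by
    intro y hy
    have h1 : x ≤ y := hx ▸ A.min'_le y (hyA y hy)
    exact lt_of_le_of_ne h1 (Ne.symm (Finset.mem_erase.mp hy).1)
  have eqx : ∀ u, u ∈ I → G.Adj v u → u ∉ A.erase x → u = x := by
    intro u hu hadj hne
    by_contra h
    exact hne (Finset.mem_erase.mpr ⟨h, (memA u).mpr ⟨hu, hadj⟩⟩)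
  have hxnot : x ∉ A.erase x := fun h => (Finset.mem_erase.mp h).1 rfl
  constructor
  · -- independence
    intro a ha b hb hadj
    simp only [Finset.mem_filter, Finset.mem_univ, true_and] at ha hb
    rw [modStruction, SimpleGraph.fromRel_adj] at hadj
    obtain ⟨hne, hrel⟩ := hadj
    match a, b with
    | Sum.inl u, Sum.inl u' =>
      simp only [Sum.elim_inl] at ha hb
      have key : ¬ (G.Adj u.val u'.val ∨ (G.Adj v u.val ∧ G.Adj v u'.val)) := by
        rintro (h | ⟨h1, h2⟩)
        · exact hI u.val ha.1 u'.val hb.1 h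
        · have e1 := eqx u.val ha.1 h1 ha.2
          have e2 := eqx u'.val hb.1 h2 hb.2
          exact hne (by apply congrArg Sum.inl; exact Subtype.ext (e1.trans e2.symm))
      rcases hrel with h | h
      · exact key h
      · exact key (by rw [modRel] at h; tauto)
    | Sum.inl u, Sum.inr p =>
      simp only [Sum.elim_inl, Sum.elim_inr] at ha hb
      have key : ¬ (G.Adj u.val p.val.1 ∨ G.Adj u.val p.val.2 ∨
          (G.Adj v u.val ∧ u.val ≠ p.val.1)) := by
        rintro (h | h | ⟨h1, h2⟩)
        · exact hI u.val ha.1 p.val.1 (hb.1 ▸ hxI) h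
        · exact hI u.val ha.1 p.val.2 (hyI _ hb.2) h
        · exact h2 (by rw [hb.1]; exact eqx u.val ha.1 h1 ha.2)
      rcases hrel with h | h
      · exact key h
      · exact key h
    | Sum.inr p, Sum.inl u =>
      simp only [Sum.elim_inl, Sum.elim_inr] at ha hb
      have key : ¬ (G.Adj u.val p.val.1 ∨ G.Adj u.val p.val.2 ∨
          (G.Adj v u.val ∧ u.val ≠ p.val.1)) := by
        rintro (h | h | ⟨h1, h2⟩)
        · exact hI u.val hb.1 p.val.1 (ha.1 ▸ hxI) h
        · exact hI u.val hb.1 p.val.2 (hyI _ ha.2) h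
        · exact h2 (by rw [ha.1]; exact eqx u.val hb.1 h1 hb.2)
      rcases hrel with h | h
      · exact key h
      · exact key h
    | Sum.inr p, Sum.inr q =>
      simp only [Sum.elim_inr] at ha hb
      have key : ∀ r s : StrNew G v, (r.val.1 = x ∧ r.val.2 ∈ A.erase x) →
          (s.val.1 = x ∧ s.val.2 ∈ A.erase x) →
          ¬ (r.val.1 ≠ s.val.1 ∨ G.Adj r.val.2 s.val.2) := by
        rintro r s hr hs (h | h)
        · exact h (hr.1.trans hs.1.symm)
        · exact hI r.val.2 (hyI _ hr.2) s.val.2 (hyI _ hs.2) h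
      rcases hrel with h | h
      · exact key p q ha hb h
      · exact key q p hb ha h
  · -- weight
    rw [Finset.sum_filter, Fintype.sum_sum_type]
    have h1 : ∑ u : StrOld v,
        (if Sum.elim (fun u : StrOld v => u.val ∈ I ∧ u.val ∉ A.erase x)
            (fun p : StrNew G v => p.val.1 = x ∧ p.val.2 ∈ A.erase x) (Sum.inl u)
          then modWeight G w v (Sum.inl u) else 0)
        = (∑ u ∈ I \ A.erase x, w u) - w v := by
      rw [← Finset.sum_filter]
      have hbij : ∑ u ∈ Finset.univ.filter
            (fun u : StrOld v => Sum.elim (fun u : StrOld v => u.val ∈ I ∧ u.val ∉ A.erase x)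
            (fun p : StrNew G v => p.val.1 = x ∧ p.val.2 ∈ A.erase x) (Sum.inl u)),
            modWeight G w v (Sum.inl u)
          = ∑ u ∈ I \ A.erase x, (if G.Adj v u then w u - w v else w u) := by
        apply Finset.sum_bij (fun (u : StrOld v) _ => u.val)
        · intro u hu
          rw [Finset.mem_filter] at hu
          simp only [Finset.mem_univ, true_and, Sum.elim_inl] at hu
          exact Finset.mem_sdiff.mpr ⟨hu.1, hu.2⟩
        · intro u _ u' _ h
          exact Subtype.ext h
        · intro b hb
          rw [Finset.mem_sdiff] at hb
          have hbv : b ≠ v := fun h => hvI (h ▸ hb.1)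
          refine ⟨⟨b, hbv⟩, ?_, rfl⟩
          rw [Finset.mem_filter]
          simp only [Finset.mem_univ, true_and, Sum.elim_inl]
          exact ⟨hb.1, hb.2⟩
        · intro u _
          rfl
      rw [hbij]
      have hxmem : x ∈ I \ A.erase x := Finset.mem_sdiff.mpr ⟨hxI, hxnot⟩
      have heq : ∀ u ∈ I \ A.erase x,
          (if G.Adj v u then w u - w v else w u) = w u - (if u = x then w v else 0) := by
        intro u hu
        rw [Finset.mem_sdiff] at hu
        by_cases hadj : G.Adj v u
        · have heqx : u = x := eqx u hu.1 hadj hu.2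
          subst heqx
          simp [hadj]
        · have : u ≠ x := fun h => hadj (h ▸ hvx)
          simp [hadj, this]
      rw [Finset.sum_congr rfl heq, Finset.sum_sub_distrib,
        Finset.sum_ite_eq' (I \ A.erase x) x (fun _ => w v), if_pos hxmem]
    have h2 : ∑ p : StrNew G v,
        (if Sum.elim (fun u : StrOld v => u.val ∈ I ∧ u.val ∉ A.erase x)
            (fun p : StrNew G v => p.val.1 = x ∧ p.val.2 ∈ A.erase x) (Sum.inr p)
          then modWeight G w v (Sum.inr p) else 0)
        = ∑ y ∈ A.erase x, w y := by
      rw [← Finset.sum_filter]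
      apply Finset.sum_bij (fun (p : StrNew G v) _ => p.val.2)
      · intro p hp
        rw [Finset.mem_filter] at hp
        simp only [Finset.mem_univ, true_and, Sum.elim_inr] at hp
        exact hp.2
      · intro p hp q hq h
        rw [Finset.mem_filter] at hp hq
        simp only [Finset.mem_univ, true_and, Sum.elim_inr] at hp hq
        exact Subtype.ext (Prod.ext (hp.1.trans hq.1.symm) h)
      · intro y hy
        refine ⟨⟨(x, y), hvx, hvy y hy, hlt y hy, hI x hxI y (hyI y hy)⟩, ?_, rfl⟩
        rw [Finset.mem_filter]
        simp only [Finset.mem_univ, true_and, Sum.elim_inr]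
        exact hy
      · intro p _
        rfl
    rw [h1, h2]
    rw [sub_add_eq_add_sub, Finset.sum_sdiff (fun y hy => hyI y hy)]
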